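/- Let b ≥ 2 be an integer. For any real number η > 2/3, the real number ∑_{j≥1} b^{-n_j}, where n_j = 2^{[j^η]} for j ≥ 1 and [·] denotes the integer part, is transcendental. -/

import Mathlib

/-!
Write `x = ∑ j, b⁻¹ ^ 2 ^ a j` with `a j = ⌊(j + 1) ^ η⌋`. Expanding, `P x = ∑ S, c S * b⁻¹ ^ S`,
where `c S` is an integer combination of the numbers of ways to write `S` as a sum of
`k ≤ deg P` exponents `2 ^ a j`; such `S` have binary weight `≤ deg P`, and `c S` grows only
polynomially in `S`. Since `a` grows like a power of `j`, its values contain, arbitrarily far out,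
`n = deg P` values `m = v₁ < ⋯ < vₙ ≤ K m`. Every integer other than `T = ∑ 2 ^ vᵢ` within
`2 ^ (m - 1)` of `T` has binary weight `> n`, so `c` vanishes on that window while
`c T = lead P * #(representations of T) ≠ 0`. If `P x = 0`, multiplying by `b ^ T` and using
integrality gives `b ^ 2 ^ (m - 1) ∣ c T`, which is impossible because `|c T|` is only
polynomial in `T ≤ n 2 ^ (K m)`.
-/

open Finset Polynomial Filter
open scoped ENNReal

def binaryWeight (n : ℕ) : ℕ := (Nat.digits 2 n).sum

lemma binaryWeight_two_pow_mul_add {t e : ℕ} (q : ℕ) (he : e < 2 ^ t) :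
    binaryWeight (2 ^ t * q + e) = binaryWeight q + binaryWeight e := by
  rcases q.eq_zero_or_pos with rfl | hq
  · simp [binaryWeight]
  have hlen : (Nat.digits 2 e).length ≤ t := (Nat.digits_length_le_iff (by norm_num) e).2 he
  have key := Nat.digits_append_zeroes_append_digits (n := e)
    (k := t - (Nat.digits 2 e).length) (by norm_num : 1 < 2) hq
  rw [Nat.add_sub_cancel' hlen] at key
  unfold binaryWeight
  rw [show 2 ^ t * q + e = e + 2 ^ t * q by ring, ← key]
  simp [add_comm]

lemma binaryWeight_two_pow_mul (t q : ℕ) : binaryWeight (2 ^ t * q) = binaryWeight q := by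
  simpa [binaryWeight] using binaryWeight_two_pow_mul_add q (Nat.two_pow_pos t)

lemma binaryWeight_one : binaryWeight 1 = 1 := by simp [binaryWeight]

lemma binaryWeight_two_pow (t : ℕ) : binaryWeight (2 ^ t) = 1 := by
  simpa [binaryWeight_one] using binaryWeight_two_pow_mul t 1

lemma binaryWeight_pos {n : ℕ} (hn : n ≠ 0) : 0 < binaryWeight n := by
  have hlow := Nat.pow_log_le_self 2 hn
  have hhigh := Nat.lt_pow_succ_log_self (by norm_num : 1 < 2) n
  have hsplit : n = 2 ^ Nat.log 2 n * 1 + (n - 2 ^ Nat.log 2 n) := by omega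
  rw [hsplit, binaryWeight_two_pow_mul_add 1 (by rw [pow_succ] at hhigh; omega),
    binaryWeight_one]
  omega

/-- Subadditivity comes from Legendre's formula `v₂(n!) = n - binaryWeight n`
and `x! * y! ∣ (x + y)!`. -/
lemma binaryWeight_add_le (x y : ℕ) :
    binaryWeight (x + y) ≤ binaryWeight x + binaryWeight y := by
  have hdvd : 2 ^ padicValNat 2 (x.factorial * y.factorial) ∣ (x + y).factorial :=
    pow_padicValNat_dvd.trans (Nat.factorial_mul_factorial_dvd_factorial_add x y)
  have hval := (padicValNat_dvd_iff_le (Nat.factorial_ne_zero _)).1 hdvd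
  rw [padicValNat.mul (Nat.factorial_ne_zero _) (Nat.factorial_ne_zero _)] at hval
  have legendre := fun n => sub_one_mul_padicValNat_factorial (p := 2) n
  simp only [Nat.add_one_sub_one, one_mul] at legendre
  rw [legendre, legendre, legendre] at hval
  have := Nat.digit_sum_le 2 x
  have := Nat.digit_sum_le 2 y
  have := Nat.digit_sum_le 2 (x + y)
  unfold binaryWeight
  omega

lemma binaryWeight_sum_two_pow_le {ι : Type*} (s : Finset ι) (g : ι → ℕ) :
    binaryWeight (∑ i ∈ s, 2 ^ g i) ≤ #s := by
  classical
  induction s using Finset.induction_on with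
  | empty => simp [binaryWeight]
  | insert i s hi ih =>
    rw [sum_insert hi, card_insert_of_notMem hi]
    grw [binaryWeight_add_le, binaryWeight_two_pow, ih]
    omega

lemma binaryWeight_sum_two_pow (s : Finset ℕ) : binaryWeight (∑ v ∈ s, 2 ^ v) = #s := by
  refine Finset.induction_on_max s (by simp [binaryWeight]) fun t s hlt ih => ?_
  have ht : t ∉ s := fun h => lt_irrefl t (hlt t h)
  rw [sum_insert ht, card_insert_of_notMem ht, ← mul_one (2 ^ t),
    binaryWeight_two_pow_mul_add 1 (Nat.geomSum_lt le_rfl hlt), binaryWeight_one, ih]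
  omega

lemma exists_sum_two_pow_eq_two_pow_mul_odd {s : Finset ℕ} {m : ℕ} (hm : m ∈ s)
    (hmin : ∀ v ∈ s, m ≤ v) : ∃ q, ∑ v ∈ s, 2 ^ v = 2 ^ m * (2 * q + 1) := by
  have hdvd : 2 ^ (m + 1) ∣ ∑ v ∈ s.erase m, 2 ^ v := dvd_sum fun v hv =>
    pow_dvd_pow 2 (lt_of_le_of_ne (hmin v (mem_of_mem_erase hv)) (ne_of_mem_erase hv).symm)
  obtain ⟨q, hq⟩ := hdvd
  exact ⟨q, by rw [← add_sum_erase s _ hm, hq]; ring⟩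

lemma binaryWeight_lt_add {m u e : ℕ} (he0 : 0 < e) (he : e < 2 ^ m) :
    binaryWeight (2 ^ m * u) < binaryWeight (2 ^ m * u + e) := by
  rw [binaryWeight_two_pow_mul, binaryWeight_two_pow_mul_add u he]
  have := binaryWeight_pos he0.ne'
  omega

lemma binaryWeight_lt_sub {t q e : ℕ} (he0 : 0 < e) (he : e < 2 ^ t) :
    binaryWeight (2 ^ (t + 1) * (2 * q + 1)) < binaryWeight (2 ^ (t + 1) * (2 * q + 1) - e) := by
  have hsplit : 2 ^ (t + 1) * (2 * q + 1) - e = 2 ^ t * (2 ^ 2 * q + 1) + (2 ^ t - e) := by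
    have h1 : 2 ^ (t + 1) * (2 * q + 1) = 4 * (2 ^ t * q) + 2 * 2 ^ t := by ring
    have h2 : 2 ^ t * (2 ^ 2 * q + 1) = 4 * (2 ^ t * q) + 2 ^ t := by ring
    rw [h1, h2]
    omega
  have h4q : binaryWeight (2 ^ 2 * q + 1) = binaryWeight q + 1 := by
    rw [binaryWeight_two_pow_mul_add q (by norm_num), binaryWeight_one]
  have h2q : binaryWeight (2 * q + 1) = binaryWeight q + 1 := by
    simpa [binaryWeight_one] using binaryWeight_two_pow_mul_add (t := 1) q one_lt_two
  rw [hsplit, binaryWeight_two_pow_mul_add _ (by omega : 2 ^ t - e < 2 ^ t),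
    binaryWeight_two_pow_mul, h4q, h2q]
  have := binaryWeight_pos (by omega : 2 ^ t - e ≠ 0)
  omega

lemma card_lt_binaryWeight_of_near_sum_two_pow {s : Finset ℕ} {t : ℕ} (ht : t + 1 ∈ s)
    (hmin : ∀ v ∈ s, t + 1 ≤ v) {S : ℕ} (hlo : ∑ v ∈ s, 2 ^ v - 2 ^ t < S)
    (hhi : S < ∑ v ∈ s, 2 ^ v + 2 ^ t) (hne : S ≠ ∑ v ∈ s, 2 ^ v) :
    #s < binaryWeight S := by
  rw [← binaryWeight_sum_two_pow s]
  obtain ⟨q, hq⟩ := exists_sum_two_pow_eq_two_pow_mul_odd ht hmin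
  rw [hq] at hlo hhi hne ⊢
  rcases lt_or_gt_of_ne hne with hlt | hgt
  · have := binaryWeight_lt_sub (t := t) (q := q)
      (e := 2 ^ (t + 1) * (2 * q + 1) - S) (by omega) (by omega)
    rwa [Nat.sub_sub_self hlt.le] at this
  · have h2t : 2 ^ t < 2 ^ (t + 1) := Nat.pow_lt_pow_succ one_lt_two
    have := binaryWeight_lt_add (m := t + 1) (u := 2 * q + 1)
      (e := S - 2 ^ (t + 1) * (2 * q + 1)) (by omega) (by omega)
    rwa [Nat.add_sub_cancel' hgt.le] at this

lemma ENNReal.tsum_pow_eq_tsum_pi {α : Type*} (g : α → ℝ≥0∞) (k : ℕ) :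
    (∑' a, g a) ^ k = ∑' f : Fin k → α, ∏ i, g (f i) := by
  induction k with
  | zero => simp
  | succ k ih =>
    rw [pow_succ', ih, ← ENNReal.tsum_mul_right]
    simp_rw [← ENNReal.tsum_mul_left]
    rw [← ENNReal.tsum_prod, ← (Fin.consEquiv fun _ => α).tsum_eq]
    simp [Fin.prod_univ_succ, Fin.consEquiv]

/-- `Nat.card` is `0` on infinite types; the fibres are finite as soon as `j < e j` eventually. -/
noncomputable def tupleCount (e : ℕ → ℕ) (k S : ℕ) : ℕ :=
  Nat.card {f : Fin k → ℕ // ∑ i, e (f i) = S}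

section TupleCount

variable {e : ℕ → ℕ} {J₀ : ℕ} (hJ : ∀ j, J₀ ≤ j → j < e j)
include hJ

lemma exists_injective_tupleFiber (k S : ℕ) :
    ∃ g : {f : Fin k → ℕ // ∑ i, e (f i) = S} → (Fin k → Fin (S + J₀)),
      Function.Injective g := by
  refine ⟨fun f i => ⟨f.1 i, ?_⟩, fun f f' h => Subtype.ext (funext fun i => ?_)⟩
  · have : e (f.1 i) ≤ S :=
      (single_le_sum (f := fun i => e (f.1 i)) (fun _ _ => Nat.zero_le _) (mem_univ i)).trans_eq f.2
    by_cases h : J₀ ≤ f.1 i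
    · have := hJ _ h
      omega
    · omega
  · simpa using congrArg Fin.val (congrFun h i)

lemma finite_tupleFiber (k S : ℕ) : Finite {f : Fin k → ℕ // ∑ i, e (f i) = S} :=
  have ⟨_, hg⟩ := exists_injective_tupleFiber hJ k S
  Finite.of_injective _ hg

lemma tupleCount_le (k S : ℕ) : tupleCount e k S ≤ (S + J₀) ^ k := by
  obtain ⟨_, hg⟩ := exists_injective_tupleFiber hJ k S
  simpa [tupleCount] using Nat.card_le_card_of_injective _ hg

lemma tsum_pow_eq_tsum_tupleCount (r : ℝ≥0∞) (k : ℕ) :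
    (∑' j, r ^ e j) ^ k = ∑' S, (tupleCount e k S : ℝ≥0∞) * r ^ S := by
  rw [ENNReal.tsum_pow_eq_tsum_pi, ← ENNReal.tsum_fiberwise _ fun f : Fin k → ℕ => ∑ i, e (f i)]
  refine tsum_congr fun S => ?_
  have : Finite ((fun f : Fin k → ℕ => ∑ i, e (f i)) ⁻¹' {S}) := finite_tupleFiber hJ k S
  calc ∑' f : (fun f : Fin k → ℕ => ∑ i, e (f i)) ⁻¹' {S}, ∏ i, r ^ e (f.1 i)
      = ∑' _ : (fun f : Fin k → ℕ => ∑ i, e (f i)) ⁻¹' {S}, r ^ S :=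
        tsum_congr fun f => by rw [prod_pow_eq_pow_sum, show ∑ i, e (f.1 i) = S from f.2]
    _ = _ := by
      rw [ENNReal.tsum_const, ENat.card_eq_coe_natCard]
      rfl

end TupleCount

lemma summable_succ_pow_div_two_pow (n : ℕ) :
    Summable fun d : ℕ => ((d : ℝ) + 1) ^ n / 2 ^ d := by
  have h := (summable_nat_add_iff 1).2
    (summable_pow_mul_geometric_of_norm_lt_one n (r := (2⁻¹ : ℝ)) (by norm_num))
  refine (h.mul_left 2).congr fun d => ?_
  push_cast
  rw [pow_succ, ← one_div, div_pow, one_pow]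
  field_simp

lemma one_le_tsum_succ_pow_div_two_pow (n : ℕ) :
    1 ≤ ∑' d : ℕ, ((d : ℝ) + 1) ^ n / 2 ^ d := by
  simpa using (summable_succ_pow_div_two_pow n).le_tsum 0 fun _ _ => by positivity

section Majorant

variable {u : ℕ → ℝ} {M : ℝ} {b c n : ℕ} (hb : 2 ≤ b) (hc : 1 ≤ c)
  (hu : ∀ S, |u S| ≤ M * (S + c) ^ n)
include hb hc hu

lemma abs_div_pow_le_of_abs_le (S : ℕ) :
    |u S| / b ^ S ≤ M * c ^ n * (((S : ℝ) + 1) ^ n / 2 ^ S) := by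
  have hc' : (1 : ℝ) ≤ c := by exact_mod_cast hc
  have hM : 0 ≤ M := nonneg_of_mul_nonneg_left ((abs_nonneg _).trans (hu 0)) (by positivity)
  calc |u S| / b ^ S ≤ M * (S + c) ^ n / 2 ^ S := by
        gcongr
        · exact hu S
        · exact_mod_cast hb
    _ ≤ M * (c * (S + 1)) ^ n / 2 ^ S := by
        gcongr
        nlinarith
    _ = M * c ^ n * (((S : ℝ) + 1) ^ n / 2 ^ S) := by rw [mul_pow]; ring

lemma summable_abs_div_pow_of_abs_le : Summable fun S => |u S| / b ^ S :=
  ((summable_succ_pow_div_two_pow n).mul_left _).of_nonneg_of_le (fun _ => by positivity)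
    (abs_div_pow_le_of_abs_le hb hc hu)

lemma tsum_abs_div_pow_le_of_abs_le :
    ∑' S, |u S| / b ^ S ≤ M * c ^ n * ∑' d : ℕ, ((d : ℝ) + 1) ^ n / 2 ^ d := by
  rw [← tsum_mul_left]
  exact (summable_abs_div_pow_of_abs_le hb hc hu).tsum_le_tsum
    (abs_div_pow_le_of_abs_le hb hc hu) ((summable_succ_pow_div_two_pow n).mul_left _)

end Majorant

lemma sum_range_div_pow_mul_pow_of_gap {b : ℕ} (hb : 0 < b) {C : ℕ → ℤ} {T J : ℕ}
    (hJ : 0 < J) (hJT : J ≤ T) (hgap : ∀ S, T - J < S → S < T + J → S ≠ T → C S = 0) :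
    (∑ S ∈ range (T + J), (C S : ℝ) / b ^ S) * b ^ T =
      b ^ J * ((∑ S ∈ range (T - J + 1), C S * b ^ (T - J - S) : ℤ) : ℝ) + C T := by
  have hbR : (0 : ℝ) < b := by exact_mod_cast hb
  rw [← sum_range_add_sum_Ico _ (by omega : T - J + 1 ≤ T + J), add_mul, sum_mul, sum_mul,
    sum_eq_single_of_mem (s := Ico (T - J + 1) (T + J)) T (mem_Ico.2 ⟨by omega, by omega⟩)
      fun S hS hne => by
        rw [hgap S (by have := (mem_Ico.1 hS).1; omega) (mem_Ico.1 hS).2 hne]; simp,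
    div_mul_cancel₀ _ (by positivity)]
  congr 1
  push_cast
  rw [mul_sum]
  refine sum_congr rfl fun S hS => ?_
  have hT : (b : ℝ) ^ T = b ^ J * b ^ (T - J - S) * b ^ S := by
    rw [← pow_add, ← pow_add]
    congr 1
    have := mem_range.1 hS
    omega
  rw [hT]
  field_simp

/-- Multiplying the series by `b ^ T` splits it into a multiple of `b ^ J`, the coefficient at `T`,
and a tail of absolute value `< 1`; as the whole is an integer, the tail vanishes. -/
lemma pow_dvd_of_hasSum_eq_zero {b : ℕ} (hb : 0 < b) {C : ℕ → ℤ}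
    (hC : HasSum (fun S => (C S : ℝ) / b ^ S) 0) {T J : ℕ} (hJT : J ≤ T)
    (hgap : ∀ S, T - J < S → S < T + J → S ≠ T → C S = 0)
    (htail : ∑' d, |(C (T + J + d) : ℝ)| / b ^ d < b ^ J) : (b : ℤ) ^ J ∣ C T := by
  obtain rfl | hJ := J.eq_zero_or_pos
  · simp
  have hbR : (0 : ℝ) < b := by exact_mod_cast hb
  set N : ℤ := ∑ S ∈ range (T - J + 1), C S * b ^ (T - J - S)
  have hshift : Summable fun d => (C (T + J + d) : ℝ) / b ^ d := by
    refine (((summable_nat_add_iff (T + J)).2 hC.summable).mul_left ((b : ℝ) ^ (T + J))).congr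
      fun d => ?_
    rw [add_comm d, pow_add]
    field_simp
    ring
  have hscaled : (∑' d, (C (d + (T + J)) : ℝ) / b ^ (d + (T + J))) * b ^ T
      = (∑' d, (C (T + J + d) : ℝ) / b ^ d) / b ^ J := by
    rw [← tsum_mul_right, ← tsum_div_const]
    refine tsum_congr fun d => ?_
    rw [add_comm d, pow_add, pow_add]
    field_simp
  have hsmall : |(∑' d, (C (d + (T + J)) : ℝ) / b ^ (d + (T + J))) * b ^ T| < 1 := by
    rw [hscaled, abs_div, abs_of_pos (by positivity : (0 : ℝ) < b ^ J), div_lt_one (by positivity)]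
    refine lt_of_le_of_lt ?_ htail
    simpa [Real.norm_eq_abs, abs_div] using norm_tsum_le_tsum_norm hshift.norm
  have hsplit := hC.summable.sum_add_tsum_nat_add (T + J)
  rw [hC.tsum_eq] at hsplit
  have hint : |((b ^ J * N + C T : ℤ) : ℝ)| < 1 := by
    push_cast
    rwa [← sum_range_div_pow_mul_pow_of_gap hb hJ hJT hgap, eq_neg_of_add_eq_zero_left hsplit,
      neg_mul, abs_neg]
  have hzero : (b : ℤ) ^ J * N + C T = 0 := Int.abs_lt_one_iff.1 (by exact_mod_cast hint)
  exact ⟨-N, by rw [mul_neg]; linarith⟩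

section SeriesCoeff

variable {e : ℕ → ℕ} {J₀ : ℕ} (hJ : ∀ j, J₀ ≤ j → j < e j)
include hJ

lemma hasSum_tupleCount_div_pow {b : ℕ} (hb : 2 ≤ b) (k : ℕ) :
    HasSum (fun S => (tupleCount e k S : ℝ) / b ^ S) ((∑' j, (1 : ℝ) / b ^ e j) ^ k) := by
  have hbound : ∀ S, |(tupleCount e k S : ℝ)| ≤ 1 * (S + (J₀ + 1 : ℕ)) ^ k := fun S => by
    rw [abs_of_nonneg (by positivity), one_mul]
    have h : tupleCount e k S ≤ (S + (J₀ + 1)) ^ k :=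
      (tupleCount_le hJ k S).trans (Nat.pow_le_pow_left (by omega) k)
    exact_mod_cast h
  have hsum : Summable (fun S => (tupleCount e k S : ℝ) / b ^ S) :=
    (summable_abs_div_pow_of_abs_le hb (by omega) hbound).of_norm_bounded fun S => by
      rw [Real.norm_eq_abs, abs_div, abs_of_pos (by positivity : (0 : ℝ) < b ^ S)]
  suffices h : (∑' j, (1 : ℝ) / b ^ e j) ^ k = ∑' S, (tupleCount e k S : ℝ) / b ^ S by
    rw [h]
    exact hsum.hasSum
  have hb0 : (b : ℝ≥0∞) ≠ 0 := by exact_mod_cast (by omega : b ≠ 0)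
  have hfin : ∀ n : ℕ, (b : ℝ≥0∞)⁻¹ ^ n ≠ ⊤ := fun n => by simp [hb0]
  have hreal : ∀ n : ℕ, ((b : ℝ≥0∞)⁻¹ ^ n).toReal = 1 / (b : ℝ) ^ n := fun n => by simp
  calc (∑' j, (1 : ℝ) / b ^ e j) ^ k = ((∑' j, (b : ℝ≥0∞)⁻¹ ^ e j) ^ k).toReal := by
        simp_rw [ENNReal.toReal_pow, ENNReal.tsum_toReal_eq fun j => hfin _, hreal]
    _ = (∑' S, (tupleCount e k S : ℝ≥0∞) * (b : ℝ≥0∞)⁻¹ ^ S).toReal := by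
        rw [tsum_pow_eq_tsum_tupleCount hJ]
    _ = ∑' S, (tupleCount e k S : ℝ) / b ^ S := by
        rw [ENNReal.tsum_toReal_eq fun S => ENNReal.mul_ne_top (ENNReal.natCast_ne_top _) (hfin S)]
        simp [div_eq_mul_inv]

noncomputable def seriesCoeff (e : ℕ → ℕ) (P : ℤ[X]) (S : ℕ) : ℤ :=
  ∑ k ∈ range (P.natDegree + 1), P.coeff k * tupleCount e k S

lemma hasSum_seriesCoeff_div_pow {b : ℕ} (hb : 2 ≤ b) (P : ℤ[X]) :
    HasSum (fun S => (seriesCoeff e P S : ℝ) / b ^ S) (aeval (∑' j, (1 : ℝ) / b ^ e j) P) := by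
  have h := hasSum_sum (s := range (P.natDegree + 1)) fun k _ =>
    (hasSum_tupleCount_div_pow hJ hb k).mul_left (P.coeff k : ℝ)
  have hfun : (fun S => (seriesCoeff e P S : ℝ) / b ^ S) =
      fun S => ∑ k ∈ range (P.natDegree + 1), (P.coeff k : ℝ) * ((tupleCount e k S : ℝ) / b ^ S) :=
    funext fun S => by simp [seriesCoeff, sum_div, mul_div_assoc]
  rw [hfun, aeval_eq_sum_range]
  simp_rw [zsmul_eq_mul]
  exact h

lemma abs_seriesCoeff_le (P : ℤ[X]) (S : ℕ) :
    |(seriesCoeff e P S : ℝ)| ≤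
      (∑ k ∈ range (P.natDegree + 1), |(P.coeff k : ℝ)|) * (S + (J₀ + 1 : ℕ)) ^ P.natDegree := by
  unfold seriesCoeff
  push_cast
  rw [sum_mul]
  refine (abs_sum_le_sum_abs _ _).trans (sum_le_sum fun k hk => ?_)
  rw [abs_mul, abs_of_nonneg (by positivity : (0 : ℝ) ≤ tupleCount e k S)]
  gcongr
  have hk : k ≤ P.natDegree := Nat.lt_succ_iff.1 (mem_range.1 hk)
  have : tupleCount e k S ≤ (S + (J₀ + 1)) ^ P.natDegree :=
    (tupleCount_le hJ k S).trans
      ((Nat.pow_le_pow_left (by omega) k).trans (Nat.pow_le_pow_right (by omega) hk))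
  exact_mod_cast this

end SeriesCoeff

section BinaryExponents

variable {a : ℕ → ℕ}

lemma tupleCount_eq_zero_of_lt_binaryWeight {k S : ℕ} (h : k < binaryWeight S) :
    tupleCount (fun j => 2 ^ a j) k S = 0 := by
  have : IsEmpty {f : Fin k → ℕ // ∑ i, 2 ^ a (f i) = S} := ⟨fun ⟨f, hf⟩ => by
    have := binaryWeight_sum_two_pow_le univ fun i => a (f i)
    rw [hf, card_univ, Fintype.card_fin] at this
    omega⟩
  exact Nat.card_of_isEmpty

lemma seriesCoeff_eq_zero_of_natDegree_lt {P : ℤ[X]} {S : ℕ} (h : P.natDegree < binaryWeight S) :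
    seriesCoeff (fun j => 2 ^ a j) P S = 0 :=
  sum_eq_zero fun k hk => by
    rw [tupleCount_eq_zero_of_lt_binaryWeight (by have := mem_range.1 hk; omega)]
    simp

lemma seriesCoeff_eq_of_binaryWeight_eq {P : ℤ[X]} {S : ℕ} (h : binaryWeight S = P.natDegree) :
    seriesCoeff (fun j => 2 ^ a j) P S =
      P.leadingCoeff * tupleCount (fun j => 2 ^ a j) P.natDegree S := by
  refine sum_eq_single_of_mem _ (self_mem_range_succ _) fun k hk hne => ?_
  rw [tupleCount_eq_zero_of_lt_binaryWeight (by have := mem_range.1 hk; omega)]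
  simp

lemma tupleCount_sum_two_pow_pos {J₀ : ℕ} (hJ : ∀ j, J₀ ≤ j → j < 2 ^ a j) {s : Finset ℕ}
    (hs : ∀ v ∈ s, v ∈ Set.range a) : 0 < tupleCount (fun j => 2 ^ a j) #s (∑ v ∈ s, 2 ^ v) := by
  have := finite_tupleFiber hJ #s (∑ v ∈ s, 2 ^ v)
  choose! j hj using hs
  refine Nat.card_pos_iff.2 ⟨⟨⟨fun i => j (s.equivFin.symm i), ?_⟩⟩, this⟩
  rw [← sum_coe_sort s]
  exact Fintype.sum_equiv s.equivFin.symm _ _ fun i => by simp [hj _ (s.equivFin.symm i).2]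

lemma seriesCoeff_sum_two_pow_ne_zero {J₀ : ℕ} (hJ : ∀ j, J₀ ≤ j → j < 2 ^ a j) {P : ℤ[X]}
    (hP0 : P ≠ 0) {s : Finset ℕ} (hs : ∀ v ∈ s, v ∈ Set.range a) (hcard : #s = P.natDegree) :
    seriesCoeff (fun j => 2 ^ a j) P (∑ v ∈ s, 2 ^ v) ≠ 0 := by
  rw [seriesCoeff_eq_of_binaryWeight_eq ((binaryWeight_sum_two_pow s).trans hcard)]
  have := tupleCount_sum_two_pow_pos hJ hs
  rw [hcard] at this
  exact mul_ne_zero (leadingCoeff_ne_zero.2 hP0) (by exact_mod_cast this.ne')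

end BinaryExponents

lemma eventually_mul_pow_lt_two_pow (c : ℝ) (p : ℕ) :
    ∀ᶠ J : ℕ in atTop, c * (J : ℝ) ^ p < 2 ^ J := by
  filter_upwards [(tendsto_pow_const_div_const_pow_of_one_lt p one_lt_two).eventually
    (gt_mem_nhds (by positivity : (0 : ℝ) < 1 / (|c| + 1)))] with J hJ
  rw [div_lt_div_iff₀ (by positivity) (by positivity), one_mul] at hJ
  have hJp : (0 : ℝ) ≤ (J : ℝ) ^ p := by positivity
  nlinarith [le_abs_self c]

lemma sum_two_pow_add_le {s : Finset ℕ} {t N : ℕ} (ht : t ≤ N) (hs : ∀ v ∈ s, v ≤ N) (c : ℕ) :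
    ∑ v ∈ s, 2 ^ v + 2 ^ t + (c + 1) ≤ (#s + c + 2) * 2 ^ N := by
  have hsum : ∑ v ∈ s, 2 ^ v ≤ #s * 2 ^ N := by
    simpa using sum_le_card_nsmul s _ _ fun v hv => Nat.pow_le_pow_right two_pos (hs v hv)
  have h2t : 2 ^ t ≤ 2 ^ N := Nat.pow_le_pow_right two_pos ht
  have hc : c + 1 ≤ (c + 1) * 2 ^ N := Nat.le_mul_of_pos_right _ (by positivity)
  nlinarith

/-- The binary-weight gap around `T = ∑ v ∈ s, 2 ^ v` forces `b ^ 2 ^ t ∣ seriesCoeff T ≠ 0`. -/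
theorem two_pow_two_pow_le_of_aeval_eq_zero {b : ℕ} (hb : 2 ≤ b) {a : ℕ → ℕ} {J₀ : ℕ}
    (hJ : ∀ j, J₀ ≤ j → j < 2 ^ a j) {P : ℤ[X]} (hP0 : P ≠ 0)
    (hP : aeval (∑' j, (1 : ℝ) / b ^ 2 ^ a j) P = 0) {s : Finset ℕ}
    (hs : ∀ v ∈ s, v ∈ Set.range a) (hcard : #s = P.natDegree) {t : ℕ} (ht : t + 1 ∈ s)
    (hmin : ∀ v ∈ s, t + 1 ≤ v) :
    (2 : ℝ) ^ 2 ^ t ≤ (∑ k ∈ range (P.natDegree + 1), |(P.coeff k : ℝ)|) *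
      (∑' d : ℕ, ((d : ℝ) + 1) ^ P.natDegree / 2 ^ d) *
      ((∑ v ∈ s, 2 ^ v + 2 ^ t + (J₀ + 1) : ℕ) : ℝ) ^ P.natDegree := by
  set n := P.natDegree
  set T := ∑ v ∈ s, 2 ^ v
  set J := 2 ^ t
  set C := seriesCoeff (fun j => 2 ^ a j) P
  set M := ∑ k ∈ range (n + 1), |(P.coeff k : ℝ)|
  set κ := ∑' d : ℕ, ((d : ℝ) + 1) ^ n / 2 ^ d
  by_contra! hlt
  have hbound : ∀ S, |(C S : ℝ)| ≤ M * (S + (J₀ + 1 : ℕ)) ^ n := abs_seriesCoeff_le hJ P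
  have hM : 0 ≤ M := sum_nonneg fun _ _ => abs_nonneg _
  have hlt' : M * κ * ((T + J + (J₀ + 1) : ℕ) : ℝ) ^ n < b ^ J :=
    hlt.trans_le (pow_le_pow_left₀ (by norm_num) (by exact_mod_cast hb) J)
  have hJT : J ≤ T := (Nat.pow_le_pow_right two_pos t.le_succ).trans
    (single_le_sum (f := fun v => 2 ^ v) (fun _ _ => Nat.zero_le _) ht)
  have hdvd : (b : ℤ) ^ J ∣ C T := by
    refine pow_dvd_of_hasSum_eq_zero (by omega) (hP ▸ hasSum_seriesCoeff_div_pow hJ hb P) hJT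
      (fun S hlo hhi hne => seriesCoeff_eq_zero_of_natDegree_lt
        (hcard ▸ card_lt_binaryWeight_of_near_sum_two_pow ht hmin hlo hhi hne :)) ?_
    calc ∑' d, |(C (T + J + d) : ℝ)| / b ^ d ≤ M * ((T + J + (J₀ + 1) : ℕ) : ℝ) ^ n * κ :=
          tsum_abs_div_pow_le_of_abs_le (c := T + J + (J₀ + 1)) hb
            ((Nat.le_add_left 1 J₀).trans (Nat.le_add_left _ _)) fun d => by
            convert hbound (T + J + d) using 3
            push_cast
            ring
      _ < b ^ J := by linarith
  have hsmall : |(C T : ℝ)| < b ^ J := calc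
    |(C T : ℝ)| ≤ M * ((T + (J₀ + 1) : ℕ) : ℝ) ^ n := by exact_mod_cast hbound T
    _ ≤ M * ((T + J + (J₀ + 1) : ℕ) : ℝ) ^ n := by
        gcongr
        exact Nat.le_add_right T J
    _ ≤ M * κ * ((T + J + (J₀ + 1) : ℕ) : ℝ) ^ n := by
        rw [mul_right_comm]
        exact le_mul_of_one_le_right (by positivity) (one_le_tsum_succ_pow_div_two_pow n)
    _ < b ^ J := hlt'
  have hle : (b : ℤ) ^ J ≤ |C T| := Int.le_of_dvd
    (abs_pos.2 (seriesCoeff_sum_two_pow_ne_zero hJ hP0 hs hcard)) ((dvd_abs _ _).2 hdvd)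
  have : ((b : ℤ) ^ J : ℝ) ≤ |(C T : ℝ)| := by exact_mod_cast hle
  push_cast at this
  linarith

def HasBoundedRatioClusters (a : ℕ → ℕ) : Prop :=
  ∀ n : ℕ, ∃ K : ℕ, ∀ m₀ : ℕ, ∃ m ≥ m₀, ∃ s : Finset ℕ, #s = n ∧
    ∀ v ∈ s, v ∈ Set.range a ∧ m ≤ v ∧ v ≤ K * m

theorem transcendental_tsum_one_div_pow_two_pow {b : ℕ} (hb : 2 ≤ b) {a : ℕ → ℕ}
    (hgrowth : ∀ᶠ j in atTop, j < 2 ^ a j) (ha : HasBoundedRatioClusters a) :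
    Transcendental ℚ (∑' j, (1 : ℝ) / b ^ 2 ^ a j) := by
  intro halg
  obtain ⟨J₀, hJ⟩ := eventually_atTop.1 hgrowth
  obtain ⟨P, hP0, hP⟩ := (IsFractionRing.isAlgebraic_iff ℤ ℚ ℝ).2 halg
  set n := P.natDegree
  have hn : 0 < n := natDegree_pos_of_aeval_root hP0 hP fun x hx => by simpa using hx
  obtain ⟨K, hK⟩ := ha n
  set c : ℝ := (∑ k ∈ range (n + 1), |(P.coeff k : ℝ)|) *
    (∑' d : ℕ, ((d : ℝ) + 1) ^ n / 2 ^ d) * ((n + J₀ + 2) * 2 ^ K : ℕ) ^ n with hc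
  obtain ⟨J₁, hJ₁⟩ := eventually_atTop.1 (eventually_mul_pow_lt_two_pow c (K * n))
  obtain ⟨m, hm, s, hcard, hs⟩ := hK (J₁ + 1)
  have hne : s.Nonempty := card_pos.1 (hcard ▸ hn)
  obtain ⟨hmv, hvK⟩ := (hs _ (s.min'_mem hne)).2
  obtain ⟨t, ht⟩ : ∃ t, s.min' hne = t + 1 := Nat.exists_eq_succ_of_ne_zero (by omega)
  have hK1 : 1 ≤ K := by nlinarith
  have hsize := sum_two_pow_add_le (N := K * (t + 1)) (by nlinarith)
    (fun v hv => (hs v hv).2.2.trans (Nat.mul_le_mul_left K (ht ▸ hmv))) J₀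
  refine (two_pow_two_pow_le_of_aeval_eq_zero hb hJ hP0 hP (fun v hv => (hs v hv).1) hcard
    (ht ▸ s.min'_mem hne) fun v hv => ht ▸ s.min'_le v hv).not_gt ?_
  calc _ ≤ (∑ k ∈ range (n + 1), |(P.coeff k : ℝ)|) * (∑' d : ℕ, ((d : ℝ) + 1) ^ n / 2 ^ d) *
        (((n + J₀ + 2) * 2 ^ (K * (t + 1)) : ℕ) : ℝ) ^ n := by
        gcongr
        exact_mod_cast hcard ▸ hsize
    _ = c * ((2 ^ t : ℕ) : ℝ) ^ (K * n) := by
        rw [show (n + J₀ + 2) * 2 ^ (K * (t + 1)) = (n + J₀ + 2) * 2 ^ K * (2 ^ t) ^ K by ring,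
          Nat.cast_mul, mul_pow, Nat.cast_pow, ← pow_mul, hc]
        ring
    _ < 2 ^ 2 ^ t := hJ₁ _ ((Nat.lt_two_pow_self).le.trans' (by omega))

lemma floor_rpow_lt_floor_rpow_two_mul {η x : ℝ} (hx : 0 ≤ x) (h : 1 ≤ (2 ^ η - 1) * x ^ η) :
    ⌊x ^ η⌋₊ < ⌊(2 * x) ^ η⌋₊ := by
  rw [Real.mul_rpow zero_le_two hx, Nat.lt_iff_add_one_le, ← Nat.floor_add_one (by positivity)]
  exact Nat.floor_le_floor (by linarith)

lemma natCast_two_pow_mul_rpow (η : ℝ) (i j : ℕ) :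
    ((2 ^ i * j : ℕ) : ℝ) ^ η = (2 : ℝ) ^ (i * η) * (j : ℝ) ^ η := by
  push_cast
  rw [Real.mul_rpow (by positivity) (by positivity), ← Real.rpow_natCast,
    ← Real.rpow_mul zero_le_two]

section FloorRpow

variable {η : ℝ} (hη : 0 < η)
include hη

lemma eventually_lt_two_pow_floor_rpow :
    ∀ᶠ j : ℕ in atTop, j < 2 ^ ⌊((j : ℝ) + 1) ^ η⌋₊ := by
  have hlog2 : 0 < Real.log 2 := Real.log_pos one_lt_two
  have hreal : ∀ᶠ x : ℝ in atTop, 2 * x ≤ 2 ^ x ^ η := by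
    filter_upwards [(isLittleO_log_rpow_atTop hη).bound (half_pos hlog2),
      (tendsto_rpow_atTop hη).eventually_ge_atTop 2, eventually_ge_atTop 1]
      with x hlog hx2 hx1
    rw [Real.norm_of_nonneg (Real.log_nonneg hx1), Real.norm_of_nonneg (by positivity)] at hlog
    rw [Real.rpow_def_of_pos two_pos, ← Real.log_le_iff_le_exp (by positivity),
      Real.log_mul two_ne_zero (by positivity)]
    nlinarith
  filter_upwards [(tendsto_atTop_add_const_right _ 1
    tendsto_natCast_atTop_atTop).eventually hreal] with j hj
  have hlt := Real.rpow_lt_rpow_of_exponent_lt one_lt_two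
    (show ((j : ℝ) + 1) ^ η < ((⌊((j : ℝ) + 1) ^ η⌋₊ + 1 : ℕ) : ℝ) by
      push_cast
      exact Nat.lt_floor_add_one _)
  rw [Real.rpow_natCast, pow_succ] at hlt
  exact_mod_cast (by linarith : (j : ℝ) < 2 ^ ⌊((j : ℝ) + 1) ^ η⌋₊)

lemma strictMono_floor_natCast_two_pow_mul_rpow {j₀ : ℕ} (hj₀ : 1 ≤ (2 ^ η - 1) * (j₀ : ℝ) ^ η) :
    StrictMono fun i => ⌊((2 ^ i * j₀ : ℕ) : ℝ) ^ η⌋₊ := by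
  have h2η : 0 < (2 : ℝ) ^ η - 1 := by linarith [Real.one_lt_rpow one_lt_two hη]
  refine strictMono_nat_of_lt_succ fun i => ?_
  rw [show ((2 ^ (i + 1) * j₀ : ℕ) : ℝ) = 2 * ((2 ^ i * j₀ : ℕ) : ℝ) by push_cast; ring]
  refine floor_rpow_lt_floor_rpow_two_mul (by positivity) (hj₀.trans ?_)
  rw [natCast_two_pow_mul_rpow]
  gcongr
  exact le_mul_of_one_le_left (by positivity) (Real.one_le_rpow one_le_two (by positivity))

lemma floor_natCast_two_pow_mul_rpow_le {i n j₀ : ℕ} (hi : i ≤ n) (hj₀ : 1 ≤ ⌊(j₀ : ℝ) ^ η⌋₊) :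
    ⌊((2 ^ i * j₀ : ℕ) : ℝ) ^ η⌋₊ ≤ 2 * ⌈(2 : ℝ) ^ (n * η)⌉₊ * ⌊(j₀ : ℝ) ^ η⌋₊ := by
  have hj₀' : (1 : ℝ) ≤ ⌊(j₀ : ℝ) ^ η⌋₊ := by exact_mod_cast hj₀
  have hfloor := Nat.lt_floor_add_one ((j₀ : ℝ) ^ η)
  suffices h : (⌊((2 ^ i * j₀ : ℕ) : ℝ) ^ η⌋₊ : ℝ) ≤ 2 * ⌈(2 : ℝ) ^ (n * η)⌉₊ * ⌊(j₀ : ℝ) ^ η⌋₊ by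
    exact_mod_cast h
  calc (⌊((2 ^ i * j₀ : ℕ) : ℝ) ^ η⌋₊ : ℝ) ≤ (2 : ℝ) ^ (i * η) * (j₀ : ℝ) ^ η :=
        natCast_two_pow_mul_rpow η i j₀ ▸ Nat.floor_le (by positivity)
    _ ≤ (2 : ℝ) ^ (n * η) * (2 * ⌊(j₀ : ℝ) ^ η⌋₊) := by
        gcongr
        · exact one_le_two
        · linarith
    _ ≤ 2 * ⌈(2 : ℝ) ^ (n * η)⌉₊ * ⌊(j₀ : ℝ) ^ η⌋₊ := by
        rw [mul_left_comm, mul_assoc]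
        gcongr
        exact Nat.le_ceil _

/-- The values at `j + 1 = 2 ^ i * j₀`, `i < n`, form such a cluster once `j₀` is large. -/
lemma hasBoundedRatioClusters_floor_rpow :
    HasBoundedRatioClusters fun j : ℕ => ⌊((j : ℝ) + 1) ^ η⌋₊ := by
  intro n
  refine ⟨2 * ⌈(2 : ℝ) ^ (n * η)⌉₊, fun m₀ => ?_⟩
  have hgrow : Tendsto (fun j : ℕ => (j : ℝ) ^ η) atTop atTop :=
    (tendsto_rpow_atTop hη).comp tendsto_natCast_atTop_atTop
  have h2η : 0 < (2 : ℝ) ^ η - 1 := by linarith [Real.one_lt_rpow one_lt_two hη]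
  obtain ⟨j₀, ⟨hm₀, hj₀⟩, hj₀1⟩ := (((hgrow.eventually_ge_atTop ((m₀ : ℝ) + 1)).and
    ((hgrow.const_mul_atTop h2η).eventually_ge_atTop 1)).and (eventually_ge_atTop 1)).exists
  have hm : m₀ + 1 ≤ ⌊(j₀ : ℝ) ^ η⌋₊ := Nat.le_floor (by exact_mod_cast hm₀)
  have hmono := strictMono_floor_natCast_two_pow_mul_rpow hη hj₀
  refine ⟨⌊(j₀ : ℝ) ^ η⌋₊, by omega, (range n).image _,
    by rw [card_image_of_injective _ hmono.injective, card_range], fun v hv => ?_⟩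
  obtain ⟨i, hi, rfl⟩ := mem_image.1 hv
  refine ⟨⟨2 ^ i * j₀ - 1, ?_⟩, by simpa using hmono.monotone (Nat.zero_le i),
    floor_natCast_two_pow_mul_rpow_le hη (mem_range.1 hi).le (by omega)⟩
  have : 1 ≤ 2 ^ i * j₀ := Nat.one_le_iff_ne_zero.2 (by positivity)
  simp only
  rw [← Nat.cast_add_one, Nat.sub_add_cancel this]

end FloorRpow

/-- Let `b ≥ 2` be an integer. For any real `η > 2/3`, the number
`∑_{j≥1} b^{-n_j}` with `n_j = 2^{⌊j^η⌋}` is transcendental. (Here the sum over `j ≥ 1`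
is written as a sum over `j : ℕ` via `j ↦ j + 1`.) -/
theorem stmt_2 (b : ℕ) (hb : 2 ≤ b) (η : ℝ) (hη : 2 / 3 < η) :
    Transcendental ℚ
      (∑' j : ℕ, (1 : ℝ) / (b : ℝ) ^ (2 ^ ⌊((j : ℝ) + 1) ^ η⌋₊)) := by
  have hη0 : 0 < η := by linarith
  exact transcendental_tsum_one_div_pow_two_pow hb (eventually_lt_two_pow_floor_rpow hη0)
    (hasBoundedRatioClusters_floor_rpow hη0)
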